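/- Let H be a Hilbert space and let A ⊂ B(H) be a unital C*-subalgebra which contains the ideal K of compact operators on H. Put S = K + ℂ·I (an operator system in A). Then for every unit vector ξ ∈ H, the vector state ω(a) = ⟨aξ, ξ⟩ on A is S-peaking; in fact it peaks on the rank-one orthogonal projection onto ℂξ, which belongs to S. -/

import Mathlib

open Filter Topology
open scoped ComplexOrder InnerProductSpace

/-- A state: a positive linear functional of norm one. -/
def IsState {B : Type*} [NormedRing B] [StarRing B] [NormedAlgebra ℂ B]
    (φ : B →L[ℂ] ℂ) : Prop :=
  ‖φ‖ = 1 ∧ ∀ a : B, 0 ≤ φ (star a * a)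

/-!
The rank-one projection `p = |ξ⟩⟨ξ|` is compact, hence lies in `A`, and compresses every operator
to a multiple of itself: `p a p = ω a • p`. If a state `φ` has `1 ≤ ‖φ p‖`, positivity of `φ p`
and `φ (1 - p)` together with `‖φ 1‖ ≤ 1` force `φ p = 1` and `φ (1 - p) = 0`. The Cauchy–Schwarz
argument for the positive form `(x, y) ↦ φ (x⋆ y)` then makes `φ` vanish on `(1 - p) A` and on
`A (1 - p)`, so `φ a = φ (p a p) = ω a`.
-/

open ComplexConjugate InnerProductSpace

lemma eq_zero_of_forall_nonneg_mul_add_sq_mul {r c : ℝ} (h : ∀ t : ℝ, 0 ≤ t * r + t ^ 2 * c) :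
    r = 0 := by
  have hdisc : discrim c r 0 ≤ 0 := discrim_le_zero fun t ↦ by nlinarith [h t]
  rw [discrim, mul_zero, sub_zero] at hdisc
  exact pow_eq_zero_iff two_ne_zero |>.mp (le_antisymm hdisc (sq_nonneg r))

lemma Complex.eq_zero_of_forall_nonneg_mul_add_sq_mul {w c : ℂ}
    (h : ∀ t : ℝ, 0 ≤ t * w + t ^ 2 * c) : w = 0 := by
  have hre : w.re = 0 := _root_.eq_zero_of_forall_nonneg_mul_add_sq_mul (c := c.re) fun t ↦ by
    simpa [sq] using (Complex.nonneg_iff.mp (h t)).1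
  have him : ∀ t : ℝ, t * w.im + t ^ 2 * c.im = 0 := fun t ↦ by
    simpa [sq, eq_comm] using (Complex.nonneg_iff.mp (h t)).2
  exact Complex.ext hre (by simp only [Complex.zero_im]; linarith [him 1, him (-1)])

lemma Complex.eq_one_and_eq_zero_of_nonneg {z w : ℂ} (hz : 0 ≤ z) (hw : 0 ≤ w)
    (hz1 : 1 ≤ ‖z‖) (hzw : ‖z + w‖ ≤ 1) : z = 1 ∧ w = 0 := by
  have hz1' : 1 ≤ z := by
    rw [← Complex.norm_of_nonneg' hz]
    exact_mod_cast hz1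
  have hzw' : z + w ≤ 1 := by
    rw [← Complex.norm_of_nonneg' (add_nonneg hz hw)]
    exact_mod_cast hzw
  have hz_eq : z = 1 := le_antisymm ((le_add_of_nonneg_right hw).trans hzw') hz1'
  refine ⟨hz_eq, le_antisymm ?_ hw⟩
  rwa [hz_eq, add_le_iff_nonpos_right] at hzw'

section PositiveFunctional

variable {B : Type*} [Ring B] [StarRing B] [Algebra ℂ B] [StarModule ℂ B]
  {F : Type*} [FunLike F B ℂ] [LinearMapClass F ℂ B ℂ] {φ : F}

lemma map_star_add_smul_mul_add_smul (x y : B) (s : ℂ) :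
    φ (star (x + s • y) * (x + s • y)) = φ (star x * x) + s * φ (star x * y) +
      conj s * φ (star y * x) + conj s * s * φ (star y * y) := by
  simp only [star_add, star_smul, add_mul, mul_add, smul_mul_assoc, mul_smul_comm,
    map_add, map_smul, smul_eq_mul, Complex.star_def]
  ring

lemma map_star_mul_eq_zero_of_map_star_mul_self_eq_zero (hφ : ∀ a : B, 0 ≤ φ (star a * a))
    {x : B} (hx : φ (star x * x) = 0) (y : B) : φ (star x * y) = 0 ∧ φ (star y * x) = 0 := by
  set u := φ (star x * y)
  set v := φ (star y * x)
  have hsum : u + v = 0 := by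
    refine Complex.eq_zero_of_forall_nonneg_mul_add_sq_mul (c := φ (star y * y)) fun t ↦ ?_
    convert hφ (x + (t : ℂ) • y) using 1
    rw [map_star_add_smul_mul_add_smul, hx, Complex.conj_ofReal]
    ring
  have hdiff : Complex.I * (u - v) = 0 := by
    refine Complex.eq_zero_of_forall_nonneg_mul_add_sq_mul (c := φ (star y * y)) fun t ↦ ?_
    convert hφ (x + ((t : ℂ) * Complex.I) • y) using 1
    rw [map_star_add_smul_mul_add_smul, hx, map_mul (starRingEnd ℂ), Complex.conj_ofReal,
      Complex.conj_I]
    linear_combination (t : ℂ) ^ 2 * φ (star y * y) * Complex.I_sq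
  have hdiff' : u - v = 0 := (mul_eq_zero.mp hdiff).resolve_left Complex.I_ne_zero
  exact ⟨by linear_combination (hsum + hdiff') / 2, by linear_combination (hsum - hdiff') / 2⟩

lemma IsStarProjection.map_mul_eq_zero_of_map_eq_zero (hφ : ∀ a : B, 0 ≤ φ (star a * a))
    {q : B} (hq : IsStarProjection q) (hq0 : φ q = 0) (y : B) : φ (q * y) = 0 ∧ φ (y * q) = 0 := by
  have hs := hq.isSelfAdjoint.star_eq
  have h := map_star_mul_eq_zero_of_map_star_mul_self_eq_zero hφ (x := q)
    (by rwa [hs, hq.isIdempotentElem.eq])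
  exact ⟨by simpa [hs] using (h y).1, by simpa [hs] using (h (star y)).2⟩

lemma IsStarProjection.map_eq_map_mul_mul (hφ : ∀ a : B, 0 ≤ φ (star a * a))
    {e : B} (he : IsStarProjection e) (he0 : φ (1 - e) = 0) (a : B) : φ a = φ (e * a * e) := by
  have hdecomp : a = (1 - e) * a + e * a * (1 - e) + e * a * e := by noncomm_ring
  have hq := he.one_sub.map_mul_eq_zero_of_map_eq_zero hφ he0
  conv_lhs => rw [hdecomp]
  rw [map_add, map_add, (hq a).1, (hq (e * a)).2, zero_add, zero_add]

end PositiveFunctional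

lemma IsState.norm_map_one_le {B : Type*} [NormedRing B] [StarRing B] [NormedAlgebra ℂ B]
    [NormOneClass B] {φ : B →L[ℂ] ℂ} (hφ : IsState φ) : ‖φ 1‖ ≤ 1 := by
  simpa [hφ.1] using φ.le_opNorm 1

lemma IsState.map_eq_one_of_one_le_norm {B : Type*} [NormedRing B] [StarRing B]
    [NormedAlgebra ℂ B] [NormOneClass B] {φ : B →L[ℂ] ℂ} (hφ : IsState φ) {e : B}
    (he : IsStarProjection e) (h : 1 ≤ ‖φ e‖) : φ e = 1 ∧ φ (1 - e) = 0 := by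
  have hnonneg {q : B} (hq : IsStarProjection q) : 0 ≤ φ q := by
    simpa [hq.isSelfAdjoint.star_eq, hq.isIdempotentElem.eq] using hφ.2 q
  refine Complex.eq_one_and_eq_zero_of_nonneg (hnonneg he) (hnonneg he.one_sub) h ?_
  rw [← map_add, add_sub_cancel]
  exact hφ.norm_map_one_le

namespace InnerProductSpace

variable {𝕜 E : Type*} [RCLike 𝕜] [NormedAddCommGroup E] [InnerProductSpace 𝕜 E]

lemma isCompactOperator_rankOne (x y : E) : IsCompactOperator (rankOne 𝕜 x y) :=
  (isCompactOperator_of_locallyCompactSpace_rng (ContinuousLinearMap.toSpanSingleton 𝕜 x)).comp_clm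
    (innerSL 𝕜 y)

lemma rankOne_comp_comp_rankOne (x y z w : E) (a : E →L[𝕜] E) :
    rankOne 𝕜 x y ∘L a ∘L rankOne 𝕜 z w = ⟪y, a z⟫_𝕜 • rankOne 𝕜 x w := by
  rw [comp_rankOne, rankOne_comp_rankOne]

end InnerProductSpace

section VectorState

variable {H : Type*} [NormedAddCommGroup H] [InnerProductSpace ℂ H] [CompleteSpace H]
  {A : StarSubalgebra ℂ (H →L[ℂ] H)} {ξ : H} {ω : A →L[ℂ] ℂ}

lemma isState_of_apply_eq_inner [Nontrivial H] (hξ : ‖ξ‖ = 1)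
    (hω : ∀ a : A, ω a = ⟪ξ, (a : H →L[ℂ] H) ξ⟫_ℂ) : IsState ω := by
  refine ⟨le_antisymm (ω.opNorm_le_bound zero_le_one fun a ↦ ?_) ?_, fun a ↦ ?_⟩
  · calc ‖ω a‖ ≤ ‖ξ‖ * ‖(a : H →L[ℂ] H) ξ‖ := hω a ▸ norm_inner_le_norm _ _
      _ ≤ ‖ξ‖ * (‖(a : H →L[ℂ] H)‖ * ‖ξ‖) := by gcongr; exact (a : H →L[ℂ] H).le_opNorm ξ
      _ = 1 * ‖a‖ := by rw [hξ, one_mul, mul_one, one_mul]; rfl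
  · simpa [hω, hξ] using ω.le_opNorm 1
  · rw [hω]
    change 0 ≤ ⟪ξ, (star (a : H →L[ℂ] H) * a) ξ⟫_ℂ
    rw [ContinuousLinearMap.star_eq_adjoint, mul_apply_eq_comp,
      ContinuousLinearMap.adjoint_inner_right, inner_self_eq_norm_sq_to_K]
    positivity

lemma eq_of_isState_of_one_le_norm_apply_rankOne [Nontrivial H] (hξ : ‖ξ‖ = 1)
    (hω : ∀ a : A, ω a = ⟪ξ, (a : H →L[ℂ] H) ξ⟫_ℂ) (hpA : rankOne ℂ ξ ξ ∈ A) {φ : A →L[ℂ] ℂ}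
    (hφ : IsState φ) (h : 1 ≤ ‖φ ⟨rankOne ℂ ξ ξ, hpA⟩‖) : φ = ω := by
  set e : A := ⟨rankOne ℂ ξ ξ, hpA⟩
  have he : IsStarProjection e :=
    ⟨Subtype.ext (isStarProjection_rankOne_self hξ).isIdempotentElem,
      Subtype.ext (isStarProjection_rankOne_self hξ).isSelfAdjoint⟩
  obtain ⟨he1, he0⟩ := hφ.map_eq_one_of_one_le_norm he h
  have hcompress (a : A) : e * a * e = ω a • e :=
    Subtype.ext <| by rw [hω]; exact rankOne_comp_comp_rankOne ξ ξ ξ ξ (a : H →L[ℂ] H)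
  ext a
  rw [he.map_eq_map_mul_mul hφ.2 he0 a, hcompress, map_smul, he1, smul_eq_mul, mul_one]

end VectorState

theorem stmt15_general {H : Type*} [NormedAddCommGroup H] [InnerProductSpace ℂ H] [CompleteSpace H]
    (A : StarSubalgebra ℂ (H →L[ℂ] H))
    (hK : ∀ T : H →L[ℂ] H, IsCompactOperator T → T ∈ A)
    (ξ : H) (hξ : ‖ξ‖ = 1)
    (p : H →L[ℂ] H) (hp : ∀ x : H, p x = ⟪ξ, x⟫_ℂ • ξ)
    (ω : ↥A →L[ℂ] ℂ) (hω : ∀ a : ↥A, ω a = ⟪ξ, (a : H →L[ℂ] H) ξ⟫_ℂ) :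
    IsState ω ∧ ∃ hpA : p ∈ A, IsCompactOperator p ∧ IsSelfAdjoint p ∧ ‖p‖ = 1 ∧
      ω ⟨p, hpA⟩ = 1 ∧
      ∀ φ : ↥A →L[ℂ] ℂ, IsState φ → φ ≠ ω → ‖φ ⟨p, hpA⟩‖ < 1 := by
  obtain rfl : p = rankOne ℂ ξ ξ := ContinuousLinearMap.ext hp
  have : Nontrivial H := ⟨ξ, 0, ne_zero_of_norm_ne_zero (by simp [hξ])⟩
  have hpA := hK _ (isCompactOperator_rankOne ξ ξ)
  refine ⟨isState_of_apply_eq_inner hξ hω, hpA, isCompactOperator_rankOne ξ ξ,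
    (isStarProjection_rankOne_self hξ).isSelfAdjoint, by simp [hξ], ?_, fun φ hφ hne ↦ ?_⟩
  · simp [hω, hξ]
  · exact lt_of_not_ge fun h ↦ hne (eq_of_isState_of_one_le_norm_apply_rankOne hξ hω hpA hφ h)

/-- let `A ⊆ B(H)` be a closed unital *-subalgebra containing the ideal of
compact operators, and put `S = K + ℂ·I`.  Then for every unit vector `ξ ∈ H` the vector
state `ω(a) = ⟪a ξ, ξ⟫` on `A` is `S`-peaking; indeed it peaks on the rank-one orthogonal
projection `p` onto `ℂ ξ`, a self-adjoint compact (hence in `S`) element of `A` of norm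
one with `ω p = 1` and `|φ p| < 1` for every state `φ ≠ ω`. -/
theorem stmt15 {H : Type*} [NormedAddCommGroup H] [InnerProductSpace ℂ H] [CompleteSpace H]
    (A : StarSubalgebra ℂ (H →L[ℂ] H)) (hAclosed : IsClosed (A : Set (H →L[ℂ] H)))
    (hK : ∀ T : H →L[ℂ] H, IsCompactOperator T → T ∈ A)
    (ξ : H) (hξ : ‖ξ‖ = 1)
    (p : H →L[ℂ] H) (hp : ∀ x : H, p x = ⟪ξ, x⟫_ℂ • ξ)
    (ω : ↥A →L[ℂ] ℂ) (hω : ∀ a : ↥A, ω a = ⟪ξ, (a : H →L[ℂ] H) ξ⟫_ℂ) :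
    IsState ω ∧ ∃ hpA : p ∈ A, IsCompactOperator p ∧ IsSelfAdjoint p ∧ ‖p‖ = 1 ∧
      ω ⟨p, hpA⟩ = 1 ∧
      ∀ φ : ↥A →L[ℂ] ℂ, IsState φ → φ ≠ ω → ‖φ ⟨p, hpA⟩‖ < 1 :=
  stmt15_general A hK ξ hξ p hp ω hω
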